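/- Let i, j ∈ {1,…,R} and suppose that α(m,j) · γ(m,i) = 0 for all m ∈ {1,…,M} (no species of the reactant complex of step j participates in step i except as a direct catalyst). Then for every x ∈ ℝ^M, [g_i, g_j](x) = −κ_{i,j}(x) · x^{α(·,j)} • γ(·,i). (Lemma 3, case 2.) -/

import Mathlib

/-! Differentiating the monomial `x^{α(·,r)}` in the direction `v` gives `∑_m α(m,r) d_m^r(x) v_m`,
so `Dg_r(x)(g_s(x)) = κ_{r,s}(x) x^{α(·,s)} • γ(·,r)` and the bracket is
`κ_{j,i} x^{α(·,i)} • γ(·,j) − κ_{i,j} x^{α(·,j)} • γ(·,i)`. Under the hypothesis every term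
`α(m,j) γ(m,i) d_m^j(x)` of `κ_{j,i}` vanishes, leaving only the second summand. -/

/-- The vector field of the `r`-th reaction step: `g_r(x) = x^{α(·,r)} • γ(·,r)`. -/
noncomputable def reactionVF (M R : ℕ) (α : Fin M → Fin R → ℕ)
    (γ : Matrix (Fin M) (Fin R) ℝ) (r : Fin R) (x : Fin M → ℝ) : Fin M → ℝ :=
  (∏ m, x m ^ α m r) • fun m => γ m r

/-- The Lie bracket of two vector fields on `ℝ^M`:
`[φ,ψ](x) = Dψ(x)(φ(x)) − Dφ(x)(ψ(x))`. -/
noncomputable def lieBracket {M : ℕ} (φ ψ : (Fin M → ℝ) → (Fin M → ℝ))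
    (x : Fin M → ℝ) : Fin M → ℝ :=
  fderiv ℝ ψ x (φ x) - fderiv ℝ φ x (ψ x)

/-- `d_m^i(x) = 0` if `α(m,i) = 0`, and `d_m^i(x) = x^{α(·,i) − e_m}` otherwise. -/
noncomputable def dmi (M R : ℕ) (α : Fin M → Fin R → ℕ) (i : Fin R) (m : Fin M)
    (x : Fin M → ℝ) : ℝ :=
  if α m i = 0 then 0 else ∏ l, x l ^ (α l i - if l = m then 1 else 0)

/-- `κ_{i,j}(x) = ∑_m α(m,i) γ(m,j) d_m^i(x)`. -/
noncomputable def kappa (M R : ℕ) (α : Fin M → Fin R → ℕ)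
    (γ : Matrix (Fin M) (Fin R) ℝ) (i j : Fin R) (x : Fin M → ℝ) : ℝ :=
  ∑ m, (α m i : ℝ) * γ m j * dmi M R α i m x

open Finset ContinuousLinearMap

theorem hasFDerivAt_prod_pow {ι : Type*} [Fintype ι] [DecidableEq ι] (a : ι → ℕ) (x : ι → ℝ) :
    HasFDerivAt (fun y : ι → ℝ => ∏ m, y m ^ a m)
      (∑ m, ((∏ l ∈ univ.erase m, x l ^ a l) * (a m * x m ^ (a m - 1))) •
        (proj m : (ι → ℝ) →L[ℝ] ℝ)) x := by
  refine (HasFDerivAt.finsetProd (u := univ) (g := fun m (y : ι → ℝ) => y m ^ a m) fun m _ =>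
    (hasDerivAt_pow (a m) (x m)).comp_hasFDerivAt x (hasFDerivAt_apply m x)).congr_fderiv ?_
  simp only [smul_smul]

-- The junk value `d_m^r = 0` for `α(m,r) = 0` is harmless: it is always multiplied by `α(m,r)`.
theorem prod_erase_pow_mul_eq_mul_dmi (M R : ℕ) (α : Fin M → Fin R → ℕ) (r : Fin R)
    (m : Fin M) (x : Fin M → ℝ) :
    (∏ l ∈ univ.erase m, x l ^ α l r) * (α m r * x m ^ (α m r - 1)) =
      α m r * dmi M R α r m x := by
  unfold dmi
  split_ifs with h
  · simp [h]
  · have hsplit : ∏ l, x l ^ (α l r - if l = m then 1 else 0) =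
        x m ^ (α m r - 1) * ∏ l ∈ univ.erase m, x l ^ α l r := by
      rw [← mul_prod_erase univ _ (mem_univ m), if_pos rfl]
      exact congrArg _ <| prod_congr rfl fun l hl => by
        rw [if_neg (ne_of_mem_erase hl), Nat.sub_zero]
    rw [hsplit]
    ring

theorem hasFDerivAt_reactionVF (M R : ℕ) (α : Fin M → Fin R → ℕ)
    (γ : Matrix (Fin M) (Fin R) ℝ) (r : Fin R) (x : Fin M → ℝ) :
    HasFDerivAt (reactionVF M R α γ r)
      ((∑ m, (α m r * dmi M R α r m x) • (proj m : (Fin M → ℝ) →L[ℝ] ℝ)).smulRight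
        fun m => γ m r) x := by
  simp only [← prod_erase_pow_mul_eq_mul_dmi]
  exact (hasFDerivAt_prod_pow (fun m => α m r) x).smul_const _

theorem fderiv_reactionVF_apply (M R : ℕ) (α : Fin M → Fin R → ℕ)
    (γ : Matrix (Fin M) (Fin R) ℝ) (r : Fin R) (x v : Fin M → ℝ) :
    fderiv ℝ (reactionVF M R α γ r) x v =
      (∑ m, α m r * dmi M R α r m x * v m) • fun m => γ m r := by
  simp [(hasFDerivAt_reactionVF M R α γ r x).fderiv, smul_eq_mul]

theorem fderiv_reactionVF_apply_reactionVF (M R : ℕ) (α : Fin M → Fin R → ℕ)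
    (γ : Matrix (Fin M) (Fin R) ℝ) (r s : Fin R) (x : Fin M → ℝ) :
    fderiv ℝ (reactionVF M R α γ r) x (reactionVF M R α γ s x) =
      (kappa M R α γ r s x * ∏ m, x m ^ α m s) • fun m => γ m r := by
  rw [fderiv_reactionVF_apply, kappa, sum_mul]
  congr 1
  refine sum_congr rfl fun m _ => ?_
  simp only [reactionVF, Pi.smul_apply, smul_eq_mul]
  ring

theorem lieBracket_reactionVF (M R : ℕ) (α : Fin M → Fin R → ℕ)
    (γ : Matrix (Fin M) (Fin R) ℝ) (i j : Fin R) (x : Fin M → ℝ) :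
    lieBracket (reactionVF M R α γ i) (reactionVF M R α γ j) x =
      (kappa M R α γ j i x * ∏ m, x m ^ α m i) • (fun m => γ m j) -
        (kappa M R α γ i j x * ∏ m, x m ^ α m j) • fun m => γ m i := by
  simp only [lieBracket, fderiv_reactionVF_apply_reactionVF]

theorem kappa_eq_zero_of_mul_eq_zero (M R : ℕ) (α : Fin M → Fin R → ℕ)
    (γ : Matrix (Fin M) (Fin R) ℝ) (i j : Fin R) (hij : ∀ m, (α m i : ℝ) * γ m j = 0)
    (x : Fin M → ℝ) : kappa M R α γ i j x = 0 :=
  sum_eq_zero fun m _ => by rw [hij m, zero_mul]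

/-- Lemma 3, case 2: if no species of the reactant complex of step `j`
participates in step `i` except as a direct catalyst, then
`[g_i, g_j](x) = −κ_{i,j}(x) x^{α(·,j)} • γ(·,i)`. -/
theorem lieBracket_reactionVF_case2 (M R : ℕ) (α : Fin M → Fin R → ℕ)
    (γ : Matrix (Fin M) (Fin R) ℝ) (i j : Fin R)
    (hji : ∀ m, (α m j : ℝ) * γ m i = 0) :
    ∀ x : Fin M → ℝ,
      lieBracket (reactionVF M R α γ i) (reactionVF M R α γ j) x =
        -((kappa M R α γ i j x * ∏ m, x m ^ α m j) • (fun m => γ m i : Fin M → ℝ)) := by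
  intro x
  rw [lieBracket_reactionVF, kappa_eq_zero_of_mul_eq_zero M R α γ j i hji, zero_mul,
    zero_smul, zero_sub]
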